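/- Let p be a prime and let H be a topological group with a closed normal subgroup T of finite index such that T is topologically isomorphic to a finite product of copies of the circle group (a torus, possibly trivial) and the quotient H/T is a finite group of p-power order. Assume H is nontrivial and H is not elementary abelian, i.e., it is not the case that H is commutative with g^p = 1 for every g ∈ H. Then there exists an element g of H such that: g lies in the center of H, g has order exactly p, and g belongs to the normal subgroup of H generated by the set of all p-th powers {x^p : x ∈ H} together with all commutators [x,y] = x y x⁻¹ y⁻¹ (x, y ∈ H). -/

import Mathlib

/-!
The conjugation action of `H` on a finite normal subgroup `N` centralised by `T` factors through
the `p`-group `H ⧸ T`, so the number of its fixed points, i.e. of elements of `N ∩ Z(H)`, is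
congruent to `|N|` modulo `p`. Hence if `p ∣ |N|`, Cauchy's theorem gives a central element of
order `p` in `N`.

If the torus is trivial, `H` is a finite `p`-group, and we take for `N` the subgroup `H^p[H,H]`,
which is nontrivial because `H` is not elementary abelian. Otherwise we take for `N` the `p`-torsion
`T[p] ≅ (ℤ/p)^r` of the torus; since every element of the torus is a `p`-th power, the central
element found lies in `H^p[H,H]`.
-/

theorem IsPGroup.exists_orderOf_eq_prime_forall_smul_eq {p : ℕ} [Fact p.Prime]
    {P N : Type*} [Group P] [Group N] [Finite N] [MulDistribMulAction P N]
    (hP : IsPGroup p P) (hN : p ∣ Nat.card N) :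
    ∃ n : N, orderOf n = p ∧ ∀ g : P, g • n = n := by
  have hF : p ∣ Nat.card (FixedPoints.subgroup P N) :=
    Nat.modEq_zero_iff_dvd.mp
      ((hP.card_modEq_card_fixedPoints N).symm.trans (Nat.modEq_zero_iff_dvd.mpr hN))
  obtain ⟨x, hx⟩ := exists_prime_orderOf_dvd_card' p hF
  exact ⟨x, by rwa [Subgroup.orderOf_coe], x.2⟩

theorem Subgroup.exists_mem_center_orderOf_eq_prime {p : ℕ} [Fact p.Prime]
    {G : Type*} [Group G] {T N : Subgroup G} [T.Normal] [N.Normal] [Finite N]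
    (hQ : IsPGroup p (G ⧸ T)) (hTN : T ≤ centralizer N) (hN : p ∣ Nat.card N) :
    ∃ g ∈ N, g ∈ center G ∧ orderOf g = p := by
  have hker : T ≤ (MulAut.conjNormal : G →* MulAut N).ker := fun t ht => by
    ext n
    simp [MulAut.conjNormal_apply, ← hTN ht n n.2]
  let _ : MulDistribMulAction (G ⧸ T) N :=
    .compHom N (QuotientGroup.lift T MulAut.conjNormal hker)
  obtain ⟨n, hn, hfix⟩ := hQ.exists_orderOf_eq_prime_forall_smul_eq hN
  refine ⟨n, n.2, mem_center_iff.mpr fun g => ?_, by rwa [orderOf_coe]⟩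
  have h : ((MulAut.conjNormal g n : N) : G) = n := congrArg Subtype.val (hfix g)
  rw [MulAut.conjNormal_apply] at h
  exact mul_inv_eq_iff_eq_mul.mp h

namespace Circle

variable {n : ℕ}

theorem exists_pow_eq (hn : n ≠ 0) (z : Circle) : ∃ w : Circle, w ^ n = z := by
  obtain ⟨t, rfl⟩ := exp_surjective z
  refine ⟨exp (t / n), ?_⟩
  rw [← exp_natCast_mul, mul_div_cancel₀ _ (Nat.cast_ne_zero.mpr hn)]

theorem finite_setOf_pow_eq_one (hn : n ≠ 0) : {z : Circle | z ^ n = 1}.Finite := by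
  refine Set.Finite.of_finite_image (f := ((↑) : Circle → ℂ)) ?_ coe_injective.injOn
  refine (Polynomial.nthRootsFinset n (1 : ℂ)).finite_toSet.subset ?_
  rintro _ ⟨z, hz : z ^ n = 1, rfl⟩
  rw [Finset.mem_coe, Polynomial.mem_nthRootsFinset (Nat.pos_of_ne_zero hn), ← coe_pow, hz,
    coe_one]

theorem exists_pow_eq_one_ne_one (hn : 1 < n) : ∃ z : Circle, z ^ n = 1 ∧ z ≠ 1 := by
  have : NeZero n := ⟨by omega⟩
  obtain ⟨ζ, hζ⟩ := HasEnoughRootsOfUnity.exists_primitiveRoot Circle n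
  exact ⟨ζ, hζ.pow_eq_one, hζ.ne_one hn⟩

variable {ι : Type*}

theorem pi_exists_pow_eq (hn : n ≠ 0) (f : ι → Circle) : ∃ g : ι → Circle, g ^ n = f := by
  choose g hg using fun i => exists_pow_eq hn (f i)
  exact ⟨g, funext hg⟩

theorem pi_finite_setOf_pow_eq_one [Finite ι] (hn : n ≠ 0) :
    {f : ι → Circle | f ^ n = 1}.Finite :=
  (Set.Finite.pi fun _ => finite_setOf_pow_eq_one hn).subset fun _ hf i _ => congrFun hf i

theorem pi_exists_pow_eq_one_ne_one [Nonempty ι] (hn : 1 < n) :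
    ∃ f : ι → Circle, f ^ n = 1 ∧ f ≠ 1 := by
  obtain ⟨z, hz, hz1⟩ := exists_pow_eq_one_ne_one hn
  exact ⟨fun _ => z, funext fun _ => hz, fun h => hz1 (congrFun h (Classical.arbitrary ι))⟩

end Circle

namespace Subgroup

variable {G : Type*} [Group G] (T : Subgroup G) [IsMulCommutative T]

def torsionBy (n : ℕ) : Subgroup G where
  carrier := {x | x ∈ T ∧ x ^ n = 1}
  one_mem' := ⟨T.one_mem, one_pow n⟩
  mul_mem' {a b} ha hb := ⟨T.mul_mem ha.1 hb.1, by
    have hab : Commute a b := T.le_centralizer hb.1 a ha.1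
    rw [hab.mul_pow, ha.2, hb.2, one_mul]⟩
  inv_mem' ha := ⟨T.inv_mem ha.1, by rw [inv_pow, ha.2, inv_one]⟩

variable {T} {n : ℕ}

instance [T.Normal] : (T.torsionBy n).Normal where
  conj_mem x hx g :=
    ⟨‹T.Normal›.conj_mem x hx.1 g, by rw [conj_pow, hx.2, mul_one, mul_inv_cancel]⟩

theorem le_centralizer_torsionBy : T ≤ centralizer (T.torsionBy n) :=
  fun _ ht x hx => T.le_centralizer ht x hx.1

variable {A : Type*} [Group A]

theorem finite_torsionBy (e : T ≃* A) (hA : {a : A | a ^ n = 1}.Finite) :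
    Finite (T.torsionBy n) := by
  have := hA.to_subtype
  let f : T.torsionBy n → {a : A | a ^ n = 1} := fun x =>
    ⟨e ⟨x, x.2.1⟩, show e _ ^ n = 1 by
      rw [← map_pow, e.map_eq_one_iff]; exact Subtype.ext x.2.2⟩
  refine Finite.of_injective f fun x y h => ?_
  simpa using congrArg Subtype.val (e.injective (congrArg Subtype.val h))

theorem prime_dvd_card_torsionBy (e : T ≃* A) {p : ℕ} [Fact p.Prime] [Finite (T.torsionBy p)]
    {a : A} (ha : a ^ p = 1) (ha1 : a ≠ 1) : p ∣ Nat.card (T.torsionBy p) := by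
  have hx : (e.symm a : G) ∈ T.torsionBy p :=
    ⟨(e.symm a).2, by rw [← coe_pow, ← map_pow, ha, map_one, coe_one]⟩
  have hord : orderOf (⟨_, hx⟩ : T.torsionBy p) = p :=
    orderOf_eq_prime (Subtype.ext hx.2) (by simpa [Subtype.ext_iff] using ha1)
  exact (dvd_of_eq hord.symm).trans (_root_.orderOf_dvd_natCard _)

end Subgroup

theorem exists_mem_center_orderOf_eq_prime_eq_pow_of_mulEquiv_pi_circle {p : ℕ} [Fact p.Prime]
    {G : Type*} [Group G] {T : Subgroup G} [T.Normal] {ι : Type*} [Finite ι] [Nonempty ι]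
    (hQ : IsPGroup p (G ⧸ T)) (e : T ≃* (ι → Circle)) :
    ∃ g ∈ Subgroup.center G, orderOf g = p ∧ ∃ y, g = y ^ p := by
  have hp : p.Prime := Fact.out
  have : IsMulCommutative T :=
    ⟨⟨fun a b => e.injective (by rw [map_mul, map_mul, mul_comm])⟩⟩
  have : Finite (T.torsionBy p) :=
    Subgroup.finite_torsionBy e (Circle.pi_finite_setOf_pow_eq_one hp.ne_zero)
  obtain ⟨f, hfp, hf1⟩ := Circle.pi_exists_pow_eq_one_ne_one (ι := ι) hp.one_lt
  obtain ⟨g, hgN, hgZ, hgp⟩ := Subgroup.exists_mem_center_orderOf_eq_prime hQ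
    Subgroup.le_centralizer_torsionBy (Subgroup.prime_dvd_card_torsionBy e hfp hf1)
  obtain ⟨y, hy⟩ := Circle.pi_exists_pow_eq hp.ne_zero (e ⟨g, hgN.1⟩)
  refine ⟨g, hgZ, hgp, e.symm y, ?_⟩
  rw [← Subgroup.coe_pow, ← map_pow, hy, MulEquiv.symm_apply_apply]

/-- The generators of the kernel `G^p [G, G]` of `G → G/p`. -/
def powCommutatorSet (G : Type*) [Group G] (p : ℕ) : Set G :=
  {x | (∃ y : G, x = y ^ p) ∨ ∃ a b : G, x = a * b * a⁻¹ * b⁻¹}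

theorem commutative_and_pow_eq_one_of_normalClosure_eq_bot {G : Type*} [Group G] {p : ℕ}
    (h : Subgroup.normalClosure (powCommutatorSet G p) = ⊥) :
    (∀ a b : G, a * b = b * a) ∧ ∀ g : G, g ^ p = 1 := by
  have hS : ∀ x ∈ powCommutatorSet G p, x = 1 :=
    fun x hx => by simpa [h] using Subgroup.subset_normalClosure hx
  exact ⟨fun a b => commutatorElement_eq_one_iff_mul_comm.mp (hS _ (Or.inr ⟨a, b, rfl⟩)),
    fun g => hS _ (Or.inl ⟨g, rfl⟩)⟩

theorem IsPGroup.exists_mem_center_orderOf_eq_prime_mem_normalClosure {p : ℕ} [Fact p.Prime]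
    {G : Type*} [Group G] [Finite G] (hG : IsPGroup p G)
    (hG' : ¬((∀ a b : G, a * b = b * a) ∧ ∀ g : G, g ^ p = 1)) :
    ∃ g ∈ Subgroup.center G, orderOf g = p ∧
      g ∈ Subgroup.normalClosure (powCommutatorSet G p) := by
  have hK := (hG.to_subgroup _).card_eq_or_dvd.resolve_left fun h =>
    hG' (commutative_and_pow_eq_one_of_normalClosure_eq_bot (Subgroup.card_eq_one.mp h))
  obtain ⟨g, hgK, hgZ, hgp⟩ :=
    Subgroup.exists_mem_center_orderOf_eq_prime (hG.to_quotient ⊥) bot_le hK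
  exact ⟨g, hgZ, hgp, hgK⟩

theorem stmt3_general (p : ℕ) (hp : p.Prime)
    (H : Type*) [Group H]
    (T : Subgroup H) [T.Normal]
    (r : ℕ) (eT : T ≃* (Fin r → Circle))
    (k : ℕ) (hHT : Nat.card (H ⧸ T) = p ^ k)
    (hnotEA : ¬ ((∀ a b : H, a * b = b * a) ∧ ∀ g : H, g ^ p = 1)) :
    ∃ g : H, g ∈ Subgroup.center H ∧ orderOf g = p ∧
      g ∈ Subgroup.normalClosure
        {x : H | (∃ y : H, x = y ^ p) ∨ ∃ a b : H, x = a * b * a⁻¹ * b⁻¹} := by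
  have : Fact p.Prime := ⟨hp⟩
  have hQ : IsPGroup p (H ⧸ T) := .of_card hHT
  rcases r.eq_zero_or_pos with rfl | hr
  · have hT : T = ⊥ :=
      Subgroup.card_eq_one.mp (by rw [Nat.card_congr eT.toEquiv, Nat.card_unique])
    have hH : Nat.card H = p ^ k := by
      rw [T.card_eq_card_quotient_mul_card_subgroup, hHT, hT, Subgroup.card_bot, mul_one]
    have : Finite H := Nat.finite_of_card_ne_zero (hH ▸ pow_ne_zero k hp.ne_zero)
    exact (IsPGroup.of_card hH).exists_mem_center_orderOf_eq_prime_mem_normalClosure hnotEA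
  · have : Nonempty (Fin r) := ⟨⟨0, hr⟩⟩
    obtain ⟨g, hgZ, hgp, y, rfl⟩ :=
      exists_mem_center_orderOf_eq_prime_eq_pow_of_mulEquiv_pi_circle hQ eT
    exact ⟨_, hgZ, hgp, Subgroup.subset_normalClosure (Or.inl ⟨y, rfl⟩)⟩

/-- Let `H` be a `p`-toral group (a topological group with a closed
normal subgroup `T` of finite index which is a torus, with `H/T` a finite
`p`-group). If `H` is nontrivial and not elementary abelian, then there is a
central element of `H` of order exactly `p` lying in the normal subgroup
generated by `p`-th powers and commutators. -/
theorem stmt3 (p : ℕ) (hp : p.Prime)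
    (H : Type*) [Group H] [TopologicalSpace H] [IsTopologicalGroup H]
    (T : Subgroup H) [T.Normal] (hTclosed : IsClosed (T : Set H))
    (r : ℕ) (eT : T ≃* (Fin r → Circle))
    (heT : Continuous eT) (heTsymm : Continuous eT.symm)
    (k : ℕ) (hHT : Nat.card (H ⧸ T) = p ^ k)
    (hnontriv : Nontrivial H)
    (hnotEA : ¬ ((∀ a b : H, a * b = b * a) ∧ ∀ g : H, g ^ p = 1)) :
    ∃ g : H, g ∈ Subgroup.center H ∧ orderOf g = p ∧
      g ∈ Subgroup.normalClosure
        {x : H | (∃ y : H, x = y ^ p) ∨ ∃ a b : H, x = a * b * a⁻¹ * b⁻¹} :=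
  stmt3_general p hp H T r eT k hHT hnotEA
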